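/- Let n, r ∈ ℕ with r ≤ n and let w ∈ {0,1}^n. Define f : {0,1}^n → ℤ/4ℤ by f(x) = Σ_{j=1}^{r} (1 + 2w_j)·x_j + 2·Σ_{i=r+1}^{n} w_i·x_i, computed in ℤ/4ℤ with the coordinates x_i ∈ {0,1} regarded as elements of ℤ/4ℤ. (i) If w_i = 1 for some i with r < i ≤ n, then N_0(f) = N_2(f) and N_1(f) = N_3(f). (ii) If w_i = 0 for all i with r < i ≤ n, let t = #{j ≤ r : w_j = 1}, s = r − t, d = min(s,t), m = r − 2d, write m = 4a + b with 0 ≤ b ≤ 3, and set η = 1 if t > s and η = 0 otherwise. Then: if b = 0, N_0(f) − N_2(f) = (−1)^a·2^{(2n−r)/2} and N_1(f) − N_3(f) = 0; if b = 1, N_0(f) − N_2(f) = (−1)^a·2^{(2n−r−1)/2} and N_1(f) − N_3(f) = (−1)^{a+η}·2^{(2n−r−1)/2}; if b = 2, N_0(f) − N_2(f) = 0 and N_1(f) − N_3(f) = (−1)^{a+η}·2^{(2n−r)/2}; if b = 3, N_0(f) − N_2(f) = (−1)^{a+1}·2^{(2n−r−1)/2} and N_1(f) − N_3(f) = (−1)^{a+η}·2^{(2n−r−1)/2}.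 -/

import Mathlib

/-!
Let `χ(c) = i ^ c` be the additive character of `ℤ/4ℤ` with values in `ℤ[i]`. Then
`∑ₓ χ(f x) = (N₀ - N₂) + (N₁ - N₃) i`, and since `f x = ∑ⱼ cⱼ xⱼ` is linear in the 0-1 vector `x`,
this sum factors as `∏ⱼ (1 + i ^ cⱼ)`. A coefficient `cⱼ = 2` contributes the factor `0`, which
gives (i). Otherwise the factors are `1 - i` (`t` times), `1 + i` (`s` times) and `2` (`n - r`
times); as `(1 - i)(1 + i) = 2` and `(1 ± i)⁴ = -4`, the product is
`(-1)ᵃ 2^(n - r + d + 2a) (1 ± i)ᵇ`, with `1 - i` exactly when `η = 1`, and (ii) reads off its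
real and imaginary parts.
-/

/-- `Ncount n f c` is the number of 0-1 vectors `x` with `f x = c` in `ℤ/4ℤ`. -/
def Ncount (n : ℕ) (f : (Fin n → Fin 2) → ZMod 4) (c : ZMod 4) : ℕ :=
  (Finset.univ.filter fun x => f x = c).card

open Finset

local notation "ℤ[i]" => GaussianInt

lemma AddChar.map_sum_eq_prod {ι A M : Type*} [AddCommMonoid A] [CommMonoid M]
    (ψ : AddChar A M) (s : Finset ι) (g : ι → A) :
    ψ (∑ i ∈ s, g i) = ∏ i ∈ s, ψ (g i) :=
  map_prod ψ.toMonoidHom (fun i => Multiplicative.ofAdd (g i)) s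

lemma AddChar.sum_pi_fin_two_map_sum_mul {ι A R : Type*} [Fintype ι] [DecidableEq ι] [Ring A]
    [CommRing R] (ψ : AddChar A R) (c : ι → A) :
    ∑ x : ι → Fin 2, ψ (∑ j, c j * ((x j : ℕ) : A)) = ∏ j, (1 + ψ (c j)) := by
  simp_rw [ψ.map_sum_eq_prod]
  rw [← Fintype.prod_sum (fun j (v : Fin 2) => ψ (c j * ((v : ℕ) : A)))]
  simp [Fin.sum_univ_two]

def iChar : AddChar (ZMod 4) ℤ[i] := AddChar.zmodChar 4 (ζ := ⟨0, 1⟩) (by decide)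

lemma sum_iChar_eq_ncount {n : ℕ} (f : (Fin n → Fin 2) → ZMod 4) :
    ∑ x, iChar (f x) = ⟨Ncount n f 0 - Ncount n f 2, Ncount n f 1 - Ncount n f 3⟩ := by
  have h0 : iChar 0 = 1 := by decide
  have h1 : iChar 1 = ⟨0, 1⟩ := by decide
  have h2 : iChar 2 = -1 := by decide
  have h3 : iChar 3 = ⟨0, -1⟩ := by decide
  rw [← sum_fiberwise' univ f (fun c => iChar c),
    show (univ : Finset (ZMod 4)) = {0, 1, 2, 3} by rfl,
    sum_insert (by decide), sum_insert (by decide), sum_insert (by decide), sum_singleton]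
  ext <;> simp [Ncount, h0, h1, h2, h3] <;> ring

section LinearForm

variable {n : ℕ} (f : (Fin n → Fin 2) → ZMod 4) (c : Fin n → ZMod 4)
  (hf : ∀ x, f x = ∑ j, c j * ((x j : ℕ) : ZMod 4))
include hf

lemma ncount_sub_eq_prod :
    (⟨Ncount n f 0 - Ncount n f 2, Ncount n f 1 - Ncount n f 3⟩ : ℤ[i]) =
      ∏ j, (1 + iChar (c j)) := by
  rw [← sum_iChar_eq_ncount, ← iChar.sum_pi_fin_two_map_sum_mul]
  simp only [hf]

lemma ncount_eq_of_coeff_eq_two {j : Fin n} (hj : c j = 2) :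
    Ncount n f 0 = Ncount n f 2 ∧ Ncount n f 1 = Ncount n f 3 := by
  have hzero := (ncount_sub_eq_prod f c hf).trans
    (prod_eq_zero (mem_univ j) (by rw [hj]; decide))
  obtain ⟨hre, him⟩ := Zsqrtd.ext_iff.mp hzero
  simp only [Zsqrtd.re_zero, Zsqrtd.im_zero, sub_eq_zero, Nat.cast_inj] at hre him
  exact ⟨hre, him⟩

end LinearForm

def linCoeff {n : ℕ} (r : ℕ) (w : Fin n → Fin 2) (j : Fin n) : ZMod 4 :=
  if j.1 < r then 1 + 2 * ((w j : ℕ) : ZMod 4) else 2 * ((w j : ℕ) : ZMod 4)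

lemma sum_linCoeff_mul {n : ℕ} (r : ℕ) (w x : Fin n → Fin 2) :
    ∑ j, linCoeff r w j * ((x j : ℕ) : ZMod 4) =
      (∑ j ∈ univ.filter fun j : Fin n => j.1 < r,
        (1 + 2 * ((w j : ℕ) : ZMod 4)) * ((x j : ℕ) : ZMod 4)) +
      2 * ∑ i ∈ univ.filter fun i : Fin n => r ≤ i.1,
        ((w i : ℕ) : ZMod 4) * ((x i : ℕ) : ZMod 4) := by
  simp only [linCoeff, ite_mul, sum_ite, mul_sum, mul_assoc, not_lt]

lemma card_filter_val_lt_and_le {n : ℕ} (r : ℕ) (p : Fin n → Prop) [DecidablePred p] :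
    #{j : Fin n | j.1 < r ∧ p j} ≤ r :=
  calc #{j : Fin n | j.1 < r ∧ p j} ≤ #{j : Fin n | j.1 < r} :=
        card_le_card (monotone_filter_right _ fun _ _ => And.left)
    _ ≤ r := by rw [Fin.card_filter_val_lt]; exact min_le_right _ _

lemma prod_one_add_iChar_linCoeff {n r : ℕ} (hr : r ≤ n) (w : Fin n → Fin 2)
    (hw : ∀ i : Fin n, r ≤ i.1 → w i = 0) :
    ∏ j, (1 + iChar (linCoeff r w j)) =
      ⟨1, -1⟩ ^ #{j : Fin n | j.1 < r ∧ w j = 1} *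
        ⟨1, 1⟩ ^ (r - #{j : Fin n | j.1 < r ∧ w j = 1}) * 2 ^ (n - r) := by
  have hfactor : ∀ j, 1 + iChar (linCoeff r w j) =
      if j.1 < r then (if w j = 1 then ⟨1, -1⟩ else ⟨1, 1⟩) else 2 := by
    intro j
    by_cases hj : j.1 < r
    · obtain h | h : w j = 0 ∨ w j = 1 := by omega
      all_goals simp [linCoeff, hj, h]; decide
    · simp [linCoeff, hj, hw j (not_lt.mp hj)]; decide
  have hlt : #{j : Fin n | j.1 < r} = r := by rw [Fin.card_filter_val_lt]; omega
  have hsplit : #{j : Fin n | j.1 < r ∧ w j = 1} + #{j : Fin n | j.1 < r ∧ ¬w j = 1} = r := by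
    have := card_filter_add_card_filter_not (s := {j : Fin n | j.1 < r}) (fun j => w j = 1)
    simp only [filter_filter] at this
    omega
  have hrest : #{j : Fin n | ¬j.1 < r} = n - r := by
    have := card_filter_add_card_filter_not (s := univ) (fun j : Fin n => j.1 < r)
    simp only [card_univ, Fintype.card_fin] at this
    omega
  simp only [hfactor, prod_ite, prod_const, filter_filter]
  rw [← hrest, ← Nat.eq_sub_of_add_eq' hsplit]

lemma neg_four_pow_eq {R : Type*} [CommRing R] (a : ℕ) :
    (-4 : R) ^ a = (-1) ^ a * 2 ^ (2 * a) := by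
  rw [pow_mul, ← mul_pow]; norm_num

lemma one_sub_I_pow_mul_one_add_I_pow {s t d a b : ℕ} (hd : d = min s t)
    (h : s + t = 2 * d + 4 * a + b) :
    (⟨1, -1⟩ : ℤ[i]) ^ t * ⟨1, 1⟩ ^ s =
      ((-1) ^ a * 2 ^ (d + 2 * a) : ℤ) * ⟨1, (-1) ^ (if s < t then 1 else 0)⟩ ^ b := by
  have hprod : (⟨1, -1⟩ : ℤ[i]) * ⟨1, 1⟩ = 2 := by decide
  split_ifs with hst
  · obtain ⟨rfl, rfl⟩ : s = d ∧ t = d + 4 * a + b := by omega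
    calc (⟨1, -1⟩ : ℤ[i]) ^ (s + 4 * a + b) * ⟨1, 1⟩ ^ s
        = (⟨1, -1⟩ * ⟨1, 1⟩) ^ s * ((⟨1, -1⟩ : ℤ[i]) ^ 4) ^ a * ⟨1, -1⟩ ^ b := by ring
      _ = _ := by
        rw [hprod, show (⟨1, -1⟩ : ℤ[i]) ^ 4 = -4 by decide, neg_four_pow_eq]
        push_cast; ring
  · obtain ⟨rfl, rfl⟩ : t = d ∧ s = d + 4 * a + b := by omega
    calc (⟨1, -1⟩ : ℤ[i]) ^ t * ⟨1, 1⟩ ^ (t + 4 * a + b)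
        = (⟨1, -1⟩ * ⟨1, 1⟩) ^ t * ((⟨1, 1⟩ : ℤ[i]) ^ 4) ^ a * ⟨1, 1⟩ ^ b := by ring
      _ = _ := by
        rw [hprod, show (⟨1, 1⟩ : ℤ[i]) ^ 4 = -4 by decide, neg_four_pow_eq]
        push_cast; ring

lemma re_im_of_eq_mul_one_add_sign_I_pow {X Y : ℤ} {a b e η K : ℕ} (hK : K = 2 * e + b)
    (h : (⟨X, Y⟩ : ℤ[i]) = ((-1) ^ a * 2 ^ e : ℤ) * ⟨1, (-1) ^ η⟩ ^ b) :
    (b = 0 → X = (-1) ^ a * 2 ^ (K / 2) ∧ Y = 0) ∧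
    (b = 1 → X = (-1) ^ a * 2 ^ ((K - 1) / 2) ∧ Y = (-1) ^ (a + η) * 2 ^ ((K - 1) / 2)) ∧
    (b = 2 → X = 0 ∧ Y = (-1) ^ (a + η) * 2 ^ (K / 2)) ∧
    (b = 3 → X = (-1) ^ (a + 1) * 2 ^ ((K - 1) / 2) ∧
      Y = (-1) ^ (a + η) * 2 ^ ((K - 1) / 2)) := by
  obtain ⟨hX, hY⟩ := Zsqrtd.ext_iff.mp h
  simp only [Zsqrtd.re_mul, Zsqrtd.im_mul, Zsqrtd.re_intCast, Zsqrtd.im_intCast, zero_mul,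
    add_zero] at hX hY
  subst hK
  rw [pow_add]
  rcases neg_one_pow_eq_or ℤ η with hσ | hσ <;> rw [hσ] at hX hY ⊢ <;>
    refine ⟨fun hb => ?_, fun hb => ?_, fun hb => ?_, fun hb => ?_⟩ <;> subst hb <;>
    simp [hX, hY, pow_succ] <;> ring

theorem stmt_3 (n r : ℕ) (hr : r ≤ n) (w : Fin n → Fin 2)
    (f : (Fin n → Fin 2) → ZMod 4)
    (hf : ∀ x, f x =
      (∑ j ∈ Finset.univ.filter fun j : Fin n => j.1 < r,
        (1 + 2 * ((w j : ℕ) : ZMod 4)) * ((x j : ℕ) : ZMod 4)) +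
      2 * ∑ i ∈ Finset.univ.filter fun i : Fin n => r ≤ i.1,
        ((w i : ℕ) : ZMod 4) * ((x i : ℕ) : ZMod 4)) :
    -- (i)
    ((∃ i : Fin n, r ≤ i.1 ∧ w i = 1) →
      Ncount n f 0 = Ncount n f 2 ∧ Ncount n f 1 = Ncount n f 3) ∧
    -- (ii)
    ((∀ i : Fin n, r ≤ i.1 → w i = 0) →
      ∀ t s d m a b η : ℕ,
        t = (Finset.univ.filter fun j : Fin n => j.1 < r ∧ w j = 1).card →
        s = r - t → d = min s t → m = r - 2 * d → m = 4 * a + b → b ≤ 3 →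
        η = (if s < t then 1 else 0) →
        ((b = 0 →
            (Ncount n f 0 : ℤ) - (Ncount n f 2 : ℤ) = (-1) ^ a * 2 ^ ((2 * n - r) / 2) ∧
            (Ncount n f 1 : ℤ) - (Ncount n f 3 : ℤ) = 0) ∧
         (b = 1 →
            (Ncount n f 0 : ℤ) - (Ncount n f 2 : ℤ) = (-1) ^ a * 2 ^ ((2 * n - r - 1) / 2) ∧
            (Ncount n f 1 : ℤ) - (Ncount n f 3 : ℤ) = (-1) ^ (a + η) * 2 ^ ((2 * n - r - 1) / 2)) ∧
         (b = 2 →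
            (Ncount n f 0 : ℤ) - (Ncount n f 2 : ℤ) = 0 ∧
            (Ncount n f 1 : ℤ) - (Ncount n f 3 : ℤ) = (-1) ^ (a + η) * 2 ^ ((2 * n - r) / 2)) ∧
         (b = 3 →
            (Ncount n f 0 : ℤ) - (Ncount n f 2 : ℤ) = (-1) ^ (a + 1) * 2 ^ ((2 * n - r - 1) / 2) ∧
            (Ncount n f 1 : ℤ) - (Ncount n f 3 : ℤ) = (-1) ^ (a + η) * 2 ^ ((2 * n - r - 1) / 2)))) := by
  have hlin : ∀ x, f x = ∑ j, linCoeff r w j * ((x j : ℕ) : ZMod 4) := fun x => by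
    rw [hf, sum_linCoeff_mul]
  have hprod := ncount_sub_eq_prod f _ hlin
  refine ⟨fun ⟨i, hri, hwi⟩ => ncount_eq_of_coeff_eq_two f _ hlin (j := i) ?_, ?_⟩
  · simp [linCoeff, not_lt.mpr hri, hwi]
  · intro hw t s d m a b η ht hs hd hm hab _ hη
    have htr : t ≤ r := ht ▸ card_filter_val_lt_and_le r _
    rw [prod_one_add_iChar_linCoeff hr w hw, ← ht, ← hs,
      one_sub_I_pow_mul_one_add_I_pow (a := a) (b := b) hd (by omega), ← hη] at hprod
    refine re_im_of_eq_mul_one_add_sign_I_pow (e := n - r + d + 2 * a) (by omega)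
      (hprod.trans ?_)
    push_cast
    ring
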